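/- Let p ∈ ℝⁿ with p ≥ 0 solve p = s + Aᵀp + Σᵢ min{rᵢ + Bᵢᵀp, 0}·Eᵢ, and define the linear Q-function parameters qˣ = s + Aᵀp and qᵘ = r + Bᵀp. Then for every x ∈ ℝⁿ with x ≥ 0 and every u ∈ ℝ^m such that x⁺ := Ax + Bu ≥ 0, the Bellman equation in Q-factor form holds: (qˣ)ᵀx + (qᵘ)ᵀu = sᵀx + rᵀu + min_{K ∈ 𝒦(E)} ((qˣ)ᵀ + (qᵘ)ᵀK)·x⁺, and the minimum on the right equals pᵀx⁺. -/

import Mathlib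

open Matrix Finset

/-- `min{v, 0}`: the minimum of 0 and of all entries of the vector `v`. -/
noncomputable def minZero {α : Type*} [Fintype α] (v : α → ℝ) : ℝ :=
  Finset.univ.fold min 0 v

/-- `‖v‖∞` for a vector: the maximum absolute entry. -/
noncomputable def vecSupNorm {α : Type*} [Fintype α] (v : α → ℝ) : ℝ :=
  Finset.univ.fold max 0 (fun a => |v a|)

/-- `‖M‖∞` for a matrix: the maximum absolute row sum. -/
noncomputable def matInfNorm {α β : Type*} [Fintype α] [Fintype β] (M : Matrix α β ℝ) : ℝ :=
  Finset.univ.fold max 0 (fun a => ∑ b, |M a b|)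

/-- `‖M‖₁` for a matrix: the maximum absolute column sum. -/
noncomputable def matOneNorm {α β : Type*} [Fintype α] [Fintype β] (M : Matrix α β ℝ) : ℝ :=
  matInfNorm Mᵀ

/-- The feasible gain set 𝒦(E): K ≥ 0 entrywise and, for each block i,
either 𝟏ᵀKᵢ = Eᵢᵀ or 𝟏ᵀKᵢ = 0. -/
def feasibleGain {n : ℕ} (m : Fin n → ℕ) (E : Matrix (Fin n) (Fin n) ℝ) :
    Set (Matrix ((i : Fin n) × Fin (m i)) (Fin n) ℝ) :=
  {K | (∀ a j, 0 ≤ K a j) ∧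
    ∀ i : Fin n, (∀ j, ∑ k : Fin (m i), K ⟨i, k⟩ j = E i j) ∨ (∀ k j, K ⟨i, k⟩ j = 0)}

/-- The extended constraint matrix Ē: for each i, mᵢ stacked copies of the row Eᵢᵀ. -/
def extE {n : ℕ} (m : Fin n → ℕ) (E : Matrix (Fin n) (Fin n) ℝ) :
    Matrix ((i : Fin n) × Fin (m i)) (Fin n) ℝ :=
  fun a j => E a.1 j

/-- `K` is a greedy gain for `v`: `K ∈ 𝒦(E)` and `Kᵢᵀ vᵢ = min{vᵢ,0}·Eᵢ` for each block i. -/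
def IsGreedy {n : ℕ} (m : Fin n → ℕ) (E : Matrix (Fin n) (Fin n) ℝ)
    (v : ((i : Fin n) × Fin (m i)) → ℝ)
    (K : Matrix ((i : Fin n) × Fin (m i)) (Fin n) ℝ) : Prop :=
  K ∈ feasibleGain m E ∧
    ∀ i j, (∑ k : Fin (m i), K ⟨i, k⟩ j * v ⟨i, k⟩)
      = minZero (fun k : Fin (m i) => v ⟨i, k⟩) * E i j

/-- The Bellman operator `p ↦ s + Aᵀp + Σᵢ min{rᵢ + Bᵢᵀp, 0}·Eᵢ`. -/
noncomputable def bellman {n : ℕ} (m : Fin n → ℕ) (A : Matrix (Fin n) (Fin n) ℝ)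
    (B : Matrix (Fin n) ((i : Fin n) × Fin (m i)) ℝ)
    (s : Fin n → ℝ) (r : ((i : Fin n) × Fin (m i)) → ℝ)
    (E : Matrix (Fin n) (Fin n) ℝ) (p : Fin n → ℝ) : Fin n → ℝ :=
  fun j => s j + Aᵀ.mulVec p j +
    ∑ i : Fin n, minZero (fun k : Fin (m i) => r ⟨i, k⟩ + Bᵀ.mulVec p ⟨i, k⟩) * E i j

/-!
For any `K ∈ 𝒦(E)`, the contribution `Kᵢᵀqᵢᵘ` of block `i` to `Kᵀqᵘ` is either `0` or a
combination of the entries of `qᵢᵘ` with nonnegative weights summing to `Eᵢ`, hence it is at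
least `min{qᵢᵘ, 0}·Eᵢ`; a greedy gain, which puts all of `Eᵢ` on a minimising entry of `qᵢᵘ`
(or nothing if `qᵢᵘ ≥ 0`), attains this bound. So `qˣ + Kᵀqᵘ ≥ p` entrywise, with equality at a
greedy `K` because `p` is a fixed point of the Bellman operator, and pairing with `x⁺ ≥ 0`
gives the minimum. The second identity is just `pᵀ(Ax + Bu) = (Aᵀp)ᵀx + (Bᵀp)ᵀu`.
-/

section Block

variable {α β : Type*} [Fintype α]

lemma minZero_nonpos (v : α → ℝ) : minZero v ≤ 0 :=
  (Finset.fold_min_le _).2 (Or.inl le_rfl)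

lemma minZero_le (v : α → ℝ) (k : α) : minZero v ≤ v k :=
  (Finset.fold_min_le _).2 (Or.inr ⟨k, Finset.mem_univ k, le_rfl⟩)

lemma minZero_eq_zero_or_exists_eq (v : α → ℝ) :
    minZero v = 0 ∨ ∃ k, minZero v = v k := by
  rcases (Finset.fold_min_le _).1 (le_refl (minZero v)) with h | ⟨k, _, hk⟩
  · exact Or.inl (le_antisymm (minZero_nonpos v) h)
  · exact Or.inr ⟨k, le_antisymm (minZero_le v k) hk⟩

lemma minZero_mul_le_sum_mul {e : β → ℝ} (he : ∀ j, 0 ≤ e j) {G : α → β → ℝ}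
    (hG : ∀ k j, 0 ≤ G k j) (hsum : (∀ j, ∑ k, G k j = e j) ∨ ∀ k j, G k j = 0)
    (v : α → ℝ) (j : β) : minZero v * e j ≤ ∑ k, G k j * v k := by
  rcases hsum with hsum | hzero
  · calc minZero v * e j = ∑ k, G k j * minZero v := by rw [← Finset.sum_mul, hsum j, mul_comm]
      _ ≤ ∑ k, G k j * v k :=
        Finset.sum_le_sum fun k _ => mul_le_mul_of_nonneg_left (minZero_le v k) (hG k j)
  · simpa [hzero] using mul_nonpos_of_nonpos_of_nonneg (minZero_nonpos v) (he j)

lemma exists_sum_mul_eq_minZero_mul [DecidableEq α] {e : β → ℝ} (he : ∀ j, 0 ≤ e j)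
    (v : α → ℝ) :
    ∃ G : α → β → ℝ, (∀ k j, 0 ≤ G k j) ∧ ((∀ j, ∑ k, G k j = e j) ∨ ∀ k j, G k j = 0) ∧
      ∀ j, ∑ k, G k j * v k = minZero v * e j := by
  rcases minZero_eq_zero_or_exists_eq v with h0 | ⟨k₀, hk₀⟩
  · exact ⟨0, fun _ _ => le_rfl, Or.inr fun _ _ => rfl, fun j => by simp [h0]⟩
  · refine ⟨fun k j => if k = k₀ then e j else 0, fun k j => ite_nonneg (he j) le_rfl,
      Or.inl fun j => by simp, fun j => by simp [hk₀, mul_comm]⟩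

end Block

section Gain

variable {n : ℕ} {m : Fin n → ℕ} {E : Matrix (Fin n) (Fin n) ℝ}

lemma transpose_mulVec_sigma_apply (K : Matrix ((i : Fin n) × Fin (m i)) (Fin n) ℝ)
    (v : ((i : Fin n) × Fin (m i)) → ℝ) (j : Fin n) :
    (Kᵀ *ᵥ v) j = ∑ i, ∑ k : Fin (m i), K ⟨i, k⟩ j * v ⟨i, k⟩ :=
  Fintype.sum_sigma _

lemma sum_minZero_mul_le_transpose_mulVec (hE : ∀ i j, 0 ≤ E i j)
    {K : Matrix ((i : Fin n) × Fin (m i)) (Fin n) ℝ} (hK : K ∈ feasibleGain m E)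
    (v : ((i : Fin n) × Fin (m i)) → ℝ) (j : Fin n) :
    ∑ i, minZero (fun k : Fin (m i) => v ⟨i, k⟩) * E i j ≤ (Kᵀ *ᵥ v) j := by
  rw [transpose_mulVec_sigma_apply]
  exact Finset.sum_le_sum fun i _ =>
    minZero_mul_le_sum_mul (hE i) (fun k j => hK.1 ⟨i, k⟩ j) (hK.2 i) _ j

lemma IsGreedy.transpose_mulVec_apply {v : ((i : Fin n) × Fin (m i)) → ℝ}
    {K : Matrix ((i : Fin n) × Fin (m i)) (Fin n) ℝ} (hK : IsGreedy m E v K) (j : Fin n) :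
    (Kᵀ *ᵥ v) j = ∑ i, minZero (fun k : Fin (m i) => v ⟨i, k⟩) * E i j := by
  rw [transpose_mulVec_sigma_apply]
  exact Finset.sum_congr rfl fun i _ => hK.2 i j

lemma exists_isGreedy (hE : ∀ i j, 0 ≤ E i j) (v : ((i : Fin n) × Fin (m i)) → ℝ) :
    ∃ K, IsGreedy m E v K := by
  choose G hG_nonneg hG_sum hG_eq using
    fun i => exists_sum_mul_eq_minZero_mul (hE i) (fun k : Fin (m i) => v ⟨i, k⟩)
  exact ⟨fun a j => G a.1 a.2 j, ⟨fun a j => hG_nonneg a.1 a.2 j, hG_sum⟩, hG_eq⟩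

end Gain

section Bellman

variable {n : ℕ} {m : Fin n → ℕ} {A : Matrix (Fin n) (Fin n) ℝ}
  {B : Matrix (Fin n) ((i : Fin n) × Fin (m i)) ℝ} {s : Fin n → ℝ}
  {r : ((i : Fin n) × Fin (m i)) → ℝ} {E : Matrix (Fin n) (Fin n) ℝ} {p : Fin n → ℝ}
  {K : Matrix ((i : Fin n) × Fin (m i)) (Fin n) ℝ}

lemma bellman_apply (j : Fin n) :
    bellman m A B s r E p j =
      (s + Aᵀ *ᵥ p) j + ∑ i, minZero (fun k : Fin (m i) => (r + Bᵀ *ᵥ p) ⟨i, k⟩) * E i j :=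
  rfl

lemma bellman_le_of_mem_feasibleGain (hE : ∀ i j, 0 ≤ E i j) (hK : K ∈ feasibleGain m E) :
    bellman m A B s r E p ≤ s + Aᵀ *ᵥ p + Kᵀ *ᵥ (r + Bᵀ *ᵥ p) := fun j => by
  rw [bellman_apply, Pi.add_apply]
  exact add_le_add_right (sum_minZero_mul_le_transpose_mulVec hE hK _ j) _

lemma IsGreedy.add_transpose_mulVec_eq_bellman (hK : IsGreedy m E (r + Bᵀ *ᵥ p) K) :
    s + Aᵀ *ᵥ p + Kᵀ *ᵥ (r + Bᵀ *ᵥ p) = bellman m A B s r E p := by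
  ext j
  rw [bellman_apply, Pi.add_apply, hK.transpose_mulVec_apply]

end Bellman

lemma add_transpose_mulVec_dotProduct_add {R ι κ : Type*} [CommSemiring R] [Fintype ι]
    [Fintype κ] (A : Matrix ι ι R) (B : Matrix ι κ R) (s p x : ι → R) (r u : κ → R) :
    (s + Aᵀ *ᵥ p) ⬝ᵥ x + (r + Bᵀ *ᵥ p) ⬝ᵥ u = s ⬝ᵥ x + r ⬝ᵥ u + p ⬝ᵥ (A *ᵥ x + B *ᵥ u) := by
  rw [add_dotProduct, add_dotProduct, dotProduct_add, mulVec_transpose, mulVec_transpose,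
    dotProduct_mulVec, dotProduct_mulVec]
  ring

theorem stmt_11_general {n : ℕ} {m : Fin n → ℕ}
    (A : Matrix (Fin n) (Fin n) ℝ) (B : Matrix (Fin n) ((i : Fin n) × Fin (m i)) ℝ)
    (s : Fin n → ℝ)
    (r : ((i : Fin n) × Fin (m i)) → ℝ)
    (E : Matrix (Fin n) (Fin n) ℝ) (hE : ∀ i j, 0 ≤ E i j)
    (p : Fin n → ℝ)
    (hpeq : p = bellman m A B s r E p)
    (x : Fin n → ℝ)
    (u : ((i : Fin n) × Fin (m i)) → ℝ)
    (hxplus : ∀ j, 0 ≤ (A.mulVec x + B.mulVec u) j) :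
    IsLeast {c : ℝ | ∃ K ∈ feasibleGain m E,
        c = ((s + Aᵀ.mulVec p) + Kᵀ.mulVec (r + Bᵀ.mulVec p)) ⬝ᵥ (A.mulVec x + B.mulVec u)}
      (p ⬝ᵥ (A.mulVec x + B.mulVec u)) ∧
    (s + Aᵀ.mulVec p) ⬝ᵥ x + (r + Bᵀ.mulVec p) ⬝ᵥ u
      = s ⬝ᵥ x + r ⬝ᵥ u + p ⬝ᵥ (A.mulVec x + B.mulVec u) := by
  obtain ⟨K, hK⟩ := exists_isGreedy hE (r + Bᵀ *ᵥ p)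
  refine ⟨⟨⟨K, hK.1, ?_⟩, ?_⟩, add_transpose_mulVec_dotProduct_add A B s p x r u⟩
  · rw [hK.add_transpose_mulVec_eq_bellman, ← hpeq]
  · rintro c ⟨K', hK', rfl⟩
    nth_rw 1 [hpeq]
    exact dotProduct_le_dotProduct_of_nonneg_right (bellman_le_of_mem_feasibleGain hE hK') hxplus

/-- the Bellman equation in Q-factor form, with `qˣ = s + Aᵀp` and
`qᵘ = r + Bᵀp`: the minimum over `K ∈ 𝒦(E)` of `((qˣ)ᵀ + (qᵘ)ᵀK)·x⁺` equals `pᵀx⁺`,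
and `(qˣ)ᵀx + (qᵘ)ᵀu = sᵀx + rᵀu + pᵀx⁺`. -/
theorem stmt_11 {n : ℕ} {m : Fin n → ℕ} (hn : 0 < n) (hm : ∀ i, 0 < m i)
    (A : Matrix (Fin n) (Fin n) ℝ) (B : Matrix (Fin n) ((i : Fin n) × Fin (m i)) ℝ)
    (s : Fin n → ℝ) (hs : ∀ j, 0 ≤ s j)
    (r : ((i : Fin n) × Fin (m i)) → ℝ) (hr : ∀ a, 0 ≤ r a)
    (E : Matrix (Fin n) (Fin n) ℝ) (hE : ∀ i j, 0 ≤ E i j)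
    (p : Fin n → ℝ) (hp0 : ∀ j, 0 ≤ p j)
    (hpeq : p = bellman m A B s r E p)
    (x : Fin n → ℝ) (hx : ∀ j, 0 ≤ x j)
    (u : ((i : Fin n) × Fin (m i)) → ℝ)
    (hxplus : ∀ j, 0 ≤ (A.mulVec x + B.mulVec u) j) :
    IsLeast {c : ℝ | ∃ K ∈ feasibleGain m E,
        c = ((s + Aᵀ.mulVec p) + Kᵀ.mulVec (r + Bᵀ.mulVec p)) ⬝ᵥ (A.mulVec x + B.mulVec u)}
      (p ⬝ᵥ (A.mulVec x + B.mulVec u)) ∧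
    (s + Aᵀ.mulVec p) ⬝ᵥ x + (r + Bᵀ.mulVec p) ⬝ᵥ u
      = s ⬝ᵥ x + r ⬝ᵥ u + p ⬝ᵥ (A.mulVec x + B.mulVec u) :=
  stmt_11_general A B s r E hE p hpeq x u hxplus
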